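/- arXiv:2507.04220 — 3 statements merged into one kernel-verified Lean document; each statement's English description precedes it below -/
import Mathlib

section
/- Let (A, B, C) be a recollement of triangulated categories with functors i^*, i_*, i^!, j_!, j^*, j_*. Let (E1, M1) and (E2, M2) be deflation factorization systems in A and C, respectively. Set E = {morphisms f in B | i^*(f) ∈ E1 and j^*(f) ∈ E2} and M = {morphisms g in B | i^!(g) ∈ M1 and j^*(g) ∈ M2}. Then (E, M) is a deflation factorization system in B. -/
/-
A deflation factorization system `(L, R)` is governed by the classes `𝒳`, `𝒴` of cocones of
`L`- and `R`-morphisms: membership in `L` or `R` depends only on the cocone, `𝒳` and `𝒴` are each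
other's orthogonals for `P ⊥ Q :⟺ Hom(P, Q) = Hom(P, Q[-1]) = 0`, and factoring `K ⟶ 0` puts every
object in a triangle `U → K → V → U[1]` with `U ∈ 𝒳`, `V ∈ 𝒴`. Conversely such data give a
factorization system: for a cocone `K` of `f`, the triangle yields `f = r ∘ β` where `r` has
cocone `V` and the cocone of `β` is left orthogonal to everything `U` is left orthogonal to.

For the recollement the glued classes are `𝒳 = {K | i^*K ∈ 𝒳₁, j^*K ∈ 𝒳₂}` and
`𝒴 = {K | i^!K ∈ 𝒴₁, j^*K ∈ 𝒴₂}`. They are orthogonal by the triangle `j_!j^*P → P → i_*i^*P`, and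
maximal because `i_*𝒴₁, j_*𝒴₂ ⊆ 𝒴` and `i_*𝒳₁, j_!𝒳₂ ⊆ 𝒳`. The triangles are built as for glued
t-structures: truncate `j^*K` to `j^*K → N₂`, let `W` be the cocone of `K → j_*N₂`, truncate `i^*W`
to `i^*W → N₁`, let `U` be the cocone of `W → i_*N₁`, and `V` the cone of `U → W → K`.
-/

open CategoryTheory CategoryTheory.Limits CategoryTheory.Pretriangulated

namespace RecollementFS

variable (A B C : Type*) [Category A] [Category B] [Category C]
  [Preadditive A] [Preadditive B] [Preadditive C]
  [HasZeroObject A] [HasZeroObject B] [HasZeroObject C]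
  [HasShift A ℤ] [HasShift B ℤ] [HasShift C ℤ]
  [∀ n : ℤ, (shiftFunctor A n).Additive] [∀ n : ℤ, (shiftFunctor B n).Additive]
  [∀ n : ℤ, (shiftFunctor C n).Additive]
  [Pretriangulated A] [Pretriangulated B] [Pretriangulated C]

/-- A recollement of triangulated categories `(A, B, C)`. -/
structure TriangulatedRecollement where
  /-- `i_* : A ⥤ B` -/
  iStar : A ⥤ B
  /-- `i^* : B ⥤ A` -/
  iUpperStar : B ⥤ A
  /-- `i^! : B ⥤ A` -/
  iShriek : B ⥤ A
  /-- `j^* : B ⥤ C` -/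
  jUpperStar : B ⥤ C
  /-- `j_! : C ⥤ B` -/
  jShriek : C ⥤ B
  /-- `j_* : C ⥤ B` -/
  jStar : C ⥤ B
  iStar_commShift : iStar.CommShift ℤ
  iUpperStar_commShift : iUpperStar.CommShift ℤ
  iShriek_commShift : iShriek.CommShift ℤ
  jUpperStar_commShift : jUpperStar.CommShift ℤ
  jShriek_commShift : jShriek.CommShift ℤ
  jStar_commShift : jStar.CommShift ℤ
  iStar_triangulated : letI := iStar_commShift; iStar.IsTriangulated
  iUpperStar_triangulated : letI := iUpperStar_commShift; iUpperStar.IsTriangulated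
  iShriek_triangulated : letI := iShriek_commShift; iShriek.IsTriangulated
  jUpperStar_triangulated : letI := jUpperStar_commShift; jUpperStar.IsTriangulated
  jShriek_triangulated : letI := jShriek_commShift; jShriek.IsTriangulated
  jStar_triangulated : letI := jStar_commShift; jStar.IsTriangulated
  /-- `i^* ⊣ i_*` -/
  adj₁ : iUpperStar ⊣ iStar
  /-- `i_* ⊣ i^!` -/
  adj₂ : iStar ⊣ iShriek
  /-- `j_! ⊣ j^*` -/
  adj₃ : jShriek ⊣ jUpperStar
  /-- `j^* ⊣ j_*` -/
  adj₄ : jUpperStar ⊣ jStar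
  iStar_full : iStar.Full
  iStar_faithful : iStar.Faithful
  jShriek_full : jShriek.Full
  jShriek_faithful : jShriek.Faithful
  jStar_full : jStar.Full
  jStar_faithful : jStar.Faithful
  /-- `j^*(X) ≅ 0` iff `X` lies in the essential image of `i_*`. -/
  isZero_iff : ∀ X : B, IsZero (jUpperStar.obj X) ↔ ∃ Y : A, Nonempty (iStar.obj Y ≅ X)
  /-- the distinguished triangle `i_* i^! X ⟶ X ⟶ j_* j^* X ⟶ (i_* i^! X)⟦1⟧`. -/
  triangle₁ : ∀ X : B, ∃ h : jStar.obj (jUpperStar.obj X) ⟶ (iStar.obj (iShriek.obj X))⟦(1 : ℤ)⟧,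
    Triangle.mk (adj₂.counit.app X) (adj₄.unit.app X) h ∈ distTriang B
  /-- the distinguished triangle `j_! j^* X ⟶ X ⟶ i_* i^* X ⟶ (j_! j^* X)⟦1⟧`. -/
  triangle₂ : ∀ X : B, ∃ h : iStar.obj (iUpperStar.obj X) ⟶ (jShriek.obj (jUpperStar.obj X))⟦(1 : ℤ)⟧,
    Triangle.mk (adj₃.counit.app X) (adj₁.unit.app X) h ∈ distTriang B

variable {𝒟 : Type*} [Category 𝒟] [Preadditive 𝒟] [HasZeroObject 𝒟]
  [HasShift 𝒟 ℤ] [∀ n : ℤ, (shiftFunctor 𝒟 n).Additive] [Pretriangulated 𝒟]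

/-- `K` is a cocone of `f : X ⟶ Y` if it fits in a distinguished triangle
`K ⟶ X ⟶ Y ⟶ K⟦1⟧`. -/
def IsCoconeOf {X Y : 𝒟} (f : X ⟶ Y) (K : 𝒟) : Prop :=
  ∃ (g : K ⟶ X) (h : Y ⟶ K⟦(1 : ℤ)⟧), Triangle.mk g f h ∈ distTriang 𝒟

/-- `l ⊥ r` iff `Hom(K_l, K_r) = 0` and `Hom(K_l, K_r⟦-1⟧) = 0` for cocones
`K_l` of `l` and `K_r` of `r`. -/
def CoconePerp {X Y Z W : 𝒟} (l : X ⟶ Y) (r : Z ⟶ W) : Prop :=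
  ∀ (Kl Kr : 𝒟), IsCoconeOf l Kl → IsCoconeOf r Kr →
    (∀ φ : Kl ⟶ Kr, φ = 0) ∧ (∀ φ : Kl ⟶ Kr⟦(-1 : ℤ)⟧, φ = 0)

/-- A deflation factorization system `(L, R)` in a triangulated category. -/
structure IsDeflFactorizationSystem (L R : MorphismProperty 𝒟) : Prop where
  factor : ∀ {X Y : 𝒟} (f : X ⟶ Y),
    ∃ (K : 𝒟) (l : X ⟶ K) (r : K ⟶ Y), L l ∧ R r ∧ l ≫ r = f
  left_eq : ∀ {X Y : 𝒟} (f : X ⟶ Y),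
    L f ↔ ∀ {Z W : 𝒟} (g : Z ⟶ W), R g → CoconePerp f g
  right_eq : ∀ {Z W : 𝒟} (g : Z ⟶ W),
    R g ↔ ∀ {X Y : 𝒟} (f : X ⟶ Y), L f → CoconePerp f g

open ZeroObject

lemma _root_.CategoryTheory.Pretriangulated.Triangle.yoneda_exact₁ (T : Triangle 𝒟)
    (hT : T ∈ distTriang 𝒟) {Q : 𝒟} (φ : T.obj₁ ⟶ Q) (hφ : T.mor₃ ≫ φ⟦(1 : ℤ)⟧' = 0) :
    ∃ χ : T.obj₂ ⟶ Q, φ = T.mor₁ ≫ χ := by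
  obtain ⟨χ, hχ⟩ : ∃ χ : T.obj₂⟦(1 : ℤ)⟧ ⟶ Q⟦(1 : ℤ)⟧, φ⟦(1 : ℤ)⟧' = (-T.mor₁⟦(1 : ℤ)⟧') ≫ χ :=
    -- the trivial `imp` unfolds `T.rotate.mor₃` to `-T.mor₁⟦1⟧'`
    Triangle.yoneda_exact₃ _ (rot_of_distTriang _ hT) _ hφ |>.imp fun _ h => h
  refine ⟨-(shiftFunctor 𝒟 (1 : ℤ)).preimage χ, (shiftFunctor 𝒟 (1 : ℤ)).map_injective ?_⟩
  rw [hχ, Functor.map_comp, Functor.map_neg, Functor.map_preimage, Preadditive.comp_neg,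
    Preadditive.neg_comp]

lemma exists_isCoconeOf {X Y : 𝒟} (f : X ⟶ Y) : ∃ K, IsCoconeOf f K :=
  let ⟨K, g, h, hT⟩ := distinguished_cocone_triangle₁ f
  ⟨K, g, h, hT⟩

lemma isCoconeOf_zero (K : 𝒟) : IsCoconeOf (0 : K ⟶ 0) K :=
  ⟨𝟙 K, 0, contractible_distinguished K⟩

lemma IsCoconeOf.of_iso {X Y X' Y' K K' : 𝒟} {f : X ⟶ Y} {f' : X' ⟶ Y'}
    (hf : IsCoconeOf f K) (eX : X ≅ X') (eY : Y ≅ Y') (comm : f ≫ eY.hom = eX.hom ≫ f')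
    (eK : K ≅ K') : IsCoconeOf f' K' := by
  obtain ⟨g, h, hT⟩ := hf
  refine ⟨eK.inv ≫ g ≫ eX.hom, eY.inv ≫ h ≫ eK.hom⟦(1 : ℤ)⟧', isomorphic_distinguished _ hT _
    (Triangle.isoMk _ _ eK.symm eX.symm eY.symm ?_ ?_ ?_)⟩
  · change (eK.inv ≫ g ≫ eX.hom) ≫ eX.inv = eK.inv ≫ g
    simp
  · change f' ≫ eY.inv = eX.inv ≫ f
    rw [← cancel_epi eX.hom, ← reassoc_of% comm]
    simp
  · change (eY.inv ≫ h ≫ eK.hom⟦(1 : ℤ)⟧') ≫ eK.inv⟦(1 : ℤ)⟧' = eY.inv ≫ h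
    simp [← Functor.map_comp]

lemma IsCoconeOf.nonempty_iso {X Y K K' : 𝒟} {f : X ⟶ Y} (hK : IsCoconeOf f K)
    (hK' : IsCoconeOf f K') : Nonempty (K ≅ K') := by
  obtain ⟨g, h, hT⟩ := hK
  obtain ⟨g', h', hT'⟩ := hK'
  obtain ⟨e, -⟩ := exists_iso_of_arrow_iso _ _ (rot_of_distTriang _ hT)
    (rot_of_distTriang _ hT') (Iso.refl _)
  exact ⟨(shiftFunctor 𝒟 (1 : ℤ)).preimageIso (Triangle.π₃.mapIso e)⟩

section Functor

variable {𝒟' : Type*} [Category 𝒟'] [Preadditive 𝒟'] [HasZeroObject 𝒟'] [HasShift 𝒟' ℤ]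
  [∀ n : ℤ, (shiftFunctor 𝒟' n).Additive] [Pretriangulated 𝒟']

lemma IsCoconeOf.map (F : 𝒟 ⥤ 𝒟') [F.CommShift ℤ] [F.IsTriangulated] {X Y K : 𝒟} {f : X ⟶ Y}
    (hf : IsCoconeOf f K) : IsCoconeOf (F.map f) (F.obj K) :=
  let ⟨g, h, hT⟩ := hf
  ⟨F.map g, F.map h ≫ (F.commShiftIso (1 : ℤ)).hom.app K, F.map_distinguished _ hT⟩

lemma IsCoconeOf.of_adjunction_homEquiv {F : 𝒟 ⥤ 𝒟'} {G : 𝒟' ⥤ 𝒟} (adj : F ⊣ G)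
    [F.CommShift ℤ] [F.IsTriangulated] [G.Full] [G.Faithful] {K W : 𝒟} {N : 𝒟'} (e : F.obj K ⟶ N)
    (hW : IsCoconeOf (adj.homEquiv K N e) W) : IsCoconeOf e (F.obj W) :=
  (hW.map F).of_iso (Iso.refl _) (asIso (adj.counit.app N))
    (by simp [← Adjunction.homEquiv_counit]) (Iso.refl _)

end Functor

section ObjPerp

omit [Preadditive 𝒟] [HasZeroObject 𝒟] [∀ n : ℤ, (shiftFunctor 𝒟 n).Additive] [Pretriangulated 𝒟]

/-- `P ⊥ Q`, i.e. `Hom(P, Q) = Hom(P, Q[-1]) = 0`, stated with `Subsingleton` so that it transports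
along bijections of hom sets such as adjunctions. -/
def ObjPerp (P Q : 𝒟) : Prop :=
  Subsingleton (P ⟶ Q) ∧ Subsingleton (P ⟶ Q⟦(-1 : ℤ)⟧)

lemma ObjPerp.of_iso {P Q P' Q' : 𝒟} (h : ObjPerp P Q) (eP : P ≅ P') (eQ : Q ≅ Q') :
    ObjPerp P' Q' :=
  ⟨(eP.homCongr eQ).subsingleton_congr.1 h.1,
    (eP.homCongr ((shiftFunctor 𝒟 (-1 : ℤ)).mapIso eQ)).subsingleton_congr.1 h.2⟩

lemma objPerp_of_isZero_left {P : 𝒟} (hP : IsZero P) (Q : 𝒟) : ObjPerp P Q :=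
  ⟨⟨hP.eq_of_src⟩, ⟨hP.eq_of_src⟩⟩

variable {𝒟' : Type*} [Category 𝒟'] [HasShift 𝒟' ℤ]

lemma objPerp_obj_iff (G : 𝒟' ⥤ 𝒟) [G.CommShift ℤ] (P : 𝒟) (Q : 𝒟') :
    ObjPerp P (G.obj Q) ↔
      Subsingleton (P ⟶ G.obj Q) ∧ Subsingleton (P ⟶ G.obj (Q⟦(-1 : ℤ)⟧)) :=
  Iff.and Iff.rfl ((Iso.refl P).homCongr ((G.commShiftIso (-1 : ℤ)).app Q)).subsingleton_congr.symm

lemma objPerp_iff_of_adjunction {F : 𝒟 ⥤ 𝒟'} {G : 𝒟' ⥤ 𝒟} (adj : F ⊣ G) [G.CommShift ℤ]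
    (P : 𝒟) (Q : 𝒟') : ObjPerp (F.obj P) Q ↔ ObjPerp P (G.obj Q) := by
  rw [objPerp_obj_iff]
  exact Iff.and (adj.homEquiv _ _).subsingleton_congr (adj.homEquiv _ _).subsingleton_congr

end ObjPerp

omit [HasZeroObject 𝒟] [∀ n : ℤ, (shiftFunctor 𝒟 n).Additive] [Pretriangulated 𝒟] in
lemma objPerp_iff_forall_eq_zero {P Q : 𝒟} :
    ObjPerp P Q ↔ (∀ φ : P ⟶ Q, φ = 0) ∧ ∀ φ : P ⟶ Q⟦(-1 : ℤ)⟧, φ = 0 :=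
  Iff.and (subsingleton_iff_forall_eq 0) (subsingleton_iff_forall_eq 0)

omit [HasZeroObject 𝒟] [Pretriangulated 𝒟] in
lemma objPerp_of_isZero_right (P : 𝒟) {Q : 𝒟} (hQ : IsZero Q) : ObjPerp P Q :=
  ⟨⟨hQ.eq_of_tgt⟩, ⟨((shiftFunctor 𝒟 (-1 : ℤ)).map_isZero hQ).eq_of_tgt⟩⟩

lemma coconePerp_iff {X Y Z W Kl Kr : 𝒟} {l : X ⟶ Y} {r : Z ⟶ W} (hl : IsCoconeOf l Kl)
    (hr : IsCoconeOf r Kr) : CoconePerp l r ↔ ObjPerp Kl Kr := by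
  refine ⟨fun h => objPerp_iff_forall_eq_zero.2 (h Kl Kr hl hr), fun h Kl' Kr' hl' hr' => ?_⟩
  obtain ⟨eKl⟩ := hl.nonempty_iso hl'
  obtain ⟨eKr⟩ := hr.nonempty_iso hr'
  exact objPerp_iff_forall_eq_zero.1 (h.of_iso eKl eKr)

def coconeClass (L : MorphismProperty 𝒟) : ObjectProperty 𝒟 :=
  fun K => ∃ (X Y : 𝒟) (f : X ⟶ Y), L f ∧ IsCoconeOf f K

lemma coconeClass_of_iso {L : MorphismProperty 𝒟} {K K' : 𝒟} (hK : coconeClass L K)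
    (e : K ≅ K') : coconeClass L K' :=
  let ⟨X, Y, f, hf, hfK⟩ := hK
  ⟨X, Y, f, hf, hfK.of_iso (Iso.refl _) (Iso.refl _) (by simp) e⟩

namespace IsDeflFactorizationSystem

variable {L R : MorphismProperty 𝒟} (h : IsDeflFactorizationSystem L R)
include h

lemma mem_left_iff {X Y K : 𝒟} {f : X ⟶ Y} (hf : IsCoconeOf f K) :
    L f ↔ ∀ V, coconeClass R V → ObjPerp K V := by
  rw [h.left_eq]
  refine ⟨fun H V ⟨_, _, g, hg, hV⟩ => (coconePerp_iff hf hV).1 (H g hg), fun H _ _ g hg => ?_⟩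
  obtain ⟨V, hV⟩ := exists_isCoconeOf g
  exact (coconePerp_iff hf hV).2 (H V ⟨_, _, g, hg, hV⟩)

lemma mem_right_iff {X Y V : 𝒟} {g : X ⟶ Y} (hg : IsCoconeOf g V) :
    R g ↔ ∀ U, coconeClass L U → ObjPerp U V := by
  rw [h.right_eq]
  refine ⟨fun H U ⟨_, _, f, hf, hU⟩ => (coconePerp_iff hU hg).1 (H f hf), fun H _ _ f hf => ?_⟩
  obtain ⟨U, hU⟩ := exists_isCoconeOf f
  exact (coconePerp_iff hU hg).2 (H U ⟨_, _, f, hf, hU⟩)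

lemma mem_left_iff_coconeClass {X Y K : 𝒟} {f : X ⟶ Y} (hf : IsCoconeOf f K) :
    L f ↔ coconeClass L K :=
  ⟨fun hL => ⟨X, Y, f, hL, hf⟩,
    fun ⟨_, _, _, hf', hK⟩ => (h.mem_left_iff hf).2 ((h.mem_left_iff hK).1 hf')⟩

lemma mem_right_iff_coconeClass {X Y V : 𝒟} {g : X ⟶ Y} (hg : IsCoconeOf g V) :
    R g ↔ coconeClass R V :=
  ⟨fun hR => ⟨X, Y, g, hR, hg⟩,
    fun ⟨_, _, _, hg', hV⟩ => (h.mem_right_iff hg).2 ((h.mem_right_iff hV).1 hg')⟩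

lemma coconeClass_left_iff (U : 𝒟) :
    coconeClass L U ↔ ∀ V, coconeClass R V → ObjPerp U V := by
  rw [← h.mem_left_iff_coconeClass (isCoconeOf_zero U), h.mem_left_iff (isCoconeOf_zero U)]

lemma coconeClass_right_iff (V : 𝒟) :
    coconeClass R V ↔ ∀ U, coconeClass L U → ObjPerp U V := by
  rw [← h.mem_right_iff_coconeClass (isCoconeOf_zero V), h.mem_right_iff (isCoconeOf_zero V)]

lemma coconeClass_left_of_isZero {U : 𝒟} (hU : IsZero U) : coconeClass L U :=
  (h.coconeClass_left_iff U).2 fun V _ => objPerp_of_isZero_left hU V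

lemma coconeClass_right_of_isZero {V : 𝒟} (hV : IsZero V) : coconeClass R V :=
  (h.coconeClass_right_iff V).2 fun U _ => objPerp_of_isZero_right U hV

lemma exists_mem_left_coconeClass_right (K : 𝒟) :
    ∃ (N : 𝒟) (e : K ⟶ N), L e ∧ coconeClass R N := by
  obtain ⟨N, e, r, he, hr, -⟩ := h.factor (0 : K ⟶ 0)
  obtain rfl : r = 0 := (isZero_zero 𝒟).eq_of_tgt _ _
  exact ⟨N, e, he, N, 0, 0, hr, isCoconeOf_zero N⟩

end IsDeflFactorizationSystem

section Factorization

variable {K X Y U V N K' Q : 𝒟} {g : K ⟶ X} {f : X ⟶ Y} {h : Y ⟶ K⟦(1 : ℤ)⟧}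
  {a : U ⟶ K} {b : K ⟶ V} {c : V ⟶ U⟦(1 : ℤ)⟧} {u : V ⟶ N} {r : N ⟶ Y} {β : X ⟶ N}
  {a' : K' ⟶ X} {b' : N ⟶ K'⟦(1 : ℤ)⟧}

lemma comp_eq_zero_of_factorization (hD : Triangle.mk g f h ∈ distTriang 𝒟)
    (hT : Triangle.mk a b c ∈ distTriang 𝒟) (hB : Triangle.mk u r (h ≫ b⟦(1 : ℤ)⟧') ∈ distTriang 𝒟)
    (hβ : Triangle.mk a' β b' ∈ distTriang 𝒟) (hgβ : g ≫ β = b ≫ u) (hβr : β ≫ r = f)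
    [Subsingleton (U ⟶ Q)] (χ : X ⟶ Q) : a' ≫ χ = 0 := by
  obtain ⟨ρ, hρ⟩ : ∃ ρ : V ⟶ Q, g ≫ χ = b ≫ ρ :=
    Triangle.yoneda_exact₂ _ hT (g ≫ χ) (Subsingleton.elim (a ≫ g ≫ χ) 0)
  have hhg : h ≫ g⟦(1 : ℤ)⟧' = 0 := comp_distTriang_mor_zero₃₁ _ hD
  have hρ₁ : (h ≫ b⟦(1 : ℤ)⟧') ≫ ρ⟦(1 : ℤ)⟧' = 0 := by
    rw [Category.assoc, ← Functor.map_comp, ← hρ, Functor.map_comp, reassoc_of% hhg, zero_comp]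
  obtain ⟨ζ, hζ⟩ : ∃ ζ : N ⟶ Q, ρ = u ≫ ζ := Triangle.yoneda_exact₁ _ hB ρ hρ₁
  have hgχ : g ≫ (χ - β ≫ ζ) = 0 := by
    rw [Preadditive.comp_sub, reassoc_of% hgβ, ← hζ, hρ, sub_self]
  obtain ⟨η, hη⟩ : ∃ η : Y ⟶ Q, χ - β ≫ ζ = f ≫ η := Triangle.yoneda_exact₂ _ hD _ hgχ
  have hχ : χ = β ≫ (ζ + r ≫ η) := by
    rw [Preadditive.comp_add, reassoc_of% hβr, ← hη, add_sub_cancel]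
  have ha'β : a' ≫ β = 0 := comp_distTriang_mor_zero₁₂ _ hβ
  rw [hχ, reassoc_of% ha'β, zero_comp]

/-- With the octahedral axiom the cocone `K'` of `β` would be isomorphic to `U`; in a
pretriangulated category this orthogonality is what a diagram chase still gives. -/
lemma subsingleton_hom_of_factorization (hD : Triangle.mk g f h ∈ distTriang 𝒟)
    (hT : Triangle.mk a b c ∈ distTriang 𝒟) (hB : Triangle.mk u r (h ≫ b⟦(1 : ℤ)⟧') ∈ distTriang 𝒟)
    (hβ : Triangle.mk a' β b' ∈ distTriang 𝒟) (hgβ : g ≫ β = b ≫ u) (hβr : β ≫ r = f)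
    [Subsingleton (U ⟶ Q)] : Subsingleton (K' ⟶ Q) := by
  refine (subsingleton_iff_forall_eq 0).2 fun φ => ?_
  obtain ⟨θ, -, hθ⟩ : ∃ θ : U ⟶ K', a ≫ g = θ ≫ a' ∧ c ≫ θ⟦(1 : ℤ)⟧' = u ≫ b' :=
    complete_distinguished_triangle_morphism₁ _ _ hT hβ g u hgβ.symm
  have hub'φ : u ≫ b' ≫ φ⟦(1 : ℤ)⟧' = 0 := by
    rw [← Category.assoc, ← hθ, Category.assoc, ← Functor.map_comp, Subsingleton.elim (θ ≫ φ) 0,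
      Functor.map_zero, comp_zero]
  obtain ⟨ρ, hρ⟩ : ∃ ρ : Y ⟶ Q⟦(1 : ℤ)⟧, b' ≫ φ⟦(1 : ℤ)⟧' = r ≫ ρ :=
    Triangle.yoneda_exact₂ _ hB _ hub'φ
  have hβb' : β ≫ b' = 0 := comp_distTriang_mor_zero₂₃ _ hβ
  have hfρ : f ≫ ρ = 0 := by
    rw [← hβr, Category.assoc, ← hρ, reassoc_of% hβb', zero_comp]
  obtain ⟨σ, hσ⟩ : ∃ σ : K⟦(1 : ℤ)⟧ ⟶ Q⟦(1 : ℤ)⟧, ρ = h ≫ σ := Triangle.yoneda_exact₃ _ hD ρ hfρ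
  obtain ⟨τ, hτ⟩ : ∃ τ : V ⟶ Q, (shiftFunctor 𝒟 (1 : ℤ)).preimage σ = b ≫ τ :=
    Triangle.yoneda_exact₂ _ hT _ (Subsingleton.elim (a ≫ _) 0)
  have hrhb : r ≫ h ≫ b⟦(1 : ℤ)⟧' = 0 := comp_distTriang_mor_zero₂₃ _ hB
  have hb'φ : b' ≫ φ⟦(1 : ℤ)⟧' = 0 := by
    rw [hρ, hσ, ← Functor.map_preimage (shiftFunctor 𝒟 (1 : ℤ)) σ, hτ, Functor.map_comp,
      ← Category.assoc h, ← Category.assoc, hrhb, zero_comp]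
  obtain ⟨χ, rfl⟩ : ∃ χ : X ⟶ Q, φ = a' ≫ χ := Triangle.yoneda_exact₁ _ hβ φ hb'φ
  exact comp_eq_zero_of_factorization hD hT hB hβ hgβ hβr χ

lemma exists_factorization_of_distTriang (hD : Triangle.mk g f h ∈ distTriang 𝒟)
    (hT : Triangle.mk a b c ∈ distTriang 𝒟) :
    ∃ (N : 𝒟) (β : X ⟶ N) (r : N ⟶ Y), β ≫ r = f ∧ IsCoconeOf r V ∧
      ∀ K' Q, IsCoconeOf β K' → Subsingleton (U ⟶ Q) → Subsingleton (K' ⟶ Q) := by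
  obtain ⟨N, u, r, hB⟩ := distinguished_cocone_triangle₂ (h ≫ b⟦(1 : ℤ)⟧')
  obtain ⟨β, hgβ, hβr⟩ : ∃ β : X ⟶ N, g ≫ β = b ≫ u ∧ f ≫ 𝟙 Y = β ≫ r :=
    complete_distinguished_triangle_morphism₂ _ _ hD hB b (𝟙 Y) (Category.id_comp _).symm
  rw [Category.comp_id] at hβr
  refine ⟨N, β, r, hβr.symm, ⟨u, _, hB⟩, fun K' Q ⟨a', b', hβ⟩ _ => ?_⟩
  exact subsingleton_hom_of_factorization hD hT hB hβ hgβ hβr.symm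

end Factorization

theorem IsDeflFactorizationSystem.of_coconeClasses {L R : MorphismProperty 𝒟}
    (𝒳 𝒴 : ObjectProperty 𝒟)
    (hL : ∀ {X Y K : 𝒟} (f : X ⟶ Y), IsCoconeOf f K → (L f ↔ 𝒳 K))
    (hR : ∀ {X Y K : 𝒟} (g : X ⟶ Y), IsCoconeOf g K → (R g ↔ 𝒴 K))
    (hperp : ∀ U V, 𝒳 U → 𝒴 V → ObjPerp U V)
    (h𝒳 : ∀ U, (∀ V, 𝒴 V → ObjPerp U V) → 𝒳 U)
    (h𝒴 : ∀ V, (∀ U, 𝒳 U → ObjPerp U V) → 𝒴 V)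
    (htri : ∀ K, ∃ (U V : 𝒟) (a : U ⟶ K) (b : K ⟶ V) (c : V ⟶ U⟦(1 : ℤ)⟧),
      Triangle.mk a b c ∈ distTriang 𝒟 ∧ 𝒳 U ∧ 𝒴 V) :
    IsDeflFactorizationSystem L R where
  factor f := by
    obtain ⟨K, g, h, hD⟩ := distinguished_cocone_triangle₁ f
    obtain ⟨U, V, a, b, c, hT, hU, hV⟩ := htri K
    obtain ⟨N, β, r, hβr, hr, hβ⟩ := exists_factorization_of_distTriang hD hT
    obtain ⟨K', hK'⟩ := exists_isCoconeOf β
    refine ⟨N, β, r, (hL β hK').2 (h𝒳 K' fun V' hV' => ?_), (hR r hr).2 hV, hβr⟩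
    exact ⟨hβ K' V' hK' (hperp U V' hU hV').1, hβ K' _ hK' (hperp U V' hU hV').2⟩
  left_eq f := by
    obtain ⟨K, hK⟩ := exists_isCoconeOf f
    rw [hL f hK]
    refine ⟨fun hK' _ _ g hg => ?_, fun H => h𝒳 K fun V hV => ?_⟩
    · obtain ⟨V, hV⟩ := exists_isCoconeOf g
      exact (coconePerp_iff hK hV).2 (hperp K V hK' ((hR g hV).1 hg))
    · exact (coconePerp_iff hK (isCoconeOf_zero V)).1 (H _ ((hR _ (isCoconeOf_zero V)).2 hV))
  right_eq g := by
    obtain ⟨V, hV⟩ := exists_isCoconeOf g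
    rw [hR g hV]
    refine ⟨fun hV' _ _ f hf => ?_, fun H => h𝒴 V fun U hU => ?_⟩
    · obtain ⟨U, hU⟩ := exists_isCoconeOf f
      exact (coconePerp_iff hU hV).2 (hperp U V ((hL f hU).1 hf) hV')
    · exact (coconePerp_iff (isCoconeOf_zero U) hV).1 (H _ ((hL _ (isCoconeOf_zero U)).2 hU))

attribute [local instance] TriangulatedRecollement.iStar_commShift
  TriangulatedRecollement.iUpperStar_commShift TriangulatedRecollement.iShriek_commShift
  TriangulatedRecollement.jUpperStar_commShift TriangulatedRecollement.jShriek_commShift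
  TriangulatedRecollement.jStar_commShift TriangulatedRecollement.iStar_triangulated
  TriangulatedRecollement.iUpperStar_triangulated TriangulatedRecollement.iShriek_triangulated
  TriangulatedRecollement.jUpperStar_triangulated TriangulatedRecollement.jShriek_triangulated
  TriangulatedRecollement.jStar_triangulated TriangulatedRecollement.iStar_full
  TriangulatedRecollement.iStar_faithful TriangulatedRecollement.jShriek_full
  TriangulatedRecollement.jShriek_faithful TriangulatedRecollement.jStar_full
  TriangulatedRecollement.jStar_faithful

namespace TriangulatedRecollement

variable {A B C} (R : TriangulatedRecollement A B C)

lemma isZero_jUpperStar_obj_iStar_obj (X : A) : IsZero (R.jUpperStar.obj (R.iStar.obj X)) :=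
  (R.isZero_iff _).2 ⟨X, ⟨Iso.refl _⟩⟩

lemma isZero_iShriek_obj_jStar_obj (Y : C) : IsZero (R.iShriek.obj (R.jStar.obj Y)) := by
  rw [IsZero.iff_id_eq_zero]
  have : Subsingleton (R.jUpperStar.obj (R.iStar.obj (R.iShriek.obj (R.jStar.obj Y))) ⟶ Y) :=
    ⟨(R.isZero_jUpperStar_obj_iStar_obj _).eq_of_src⟩
  exact ((R.adj₂.homEquiv _ _).symm.trans (R.adj₄.homEquiv _ _).symm).subsingleton.elim _ _

lemma isZero_iUpperStar_obj_jShriek_obj (Y : C) : IsZero (R.iUpperStar.obj (R.jShriek.obj Y)) := by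
  rw [IsZero.iff_id_eq_zero]
  have : Subsingleton (Y ⟶ R.jUpperStar.obj (R.iStar.obj (R.iUpperStar.obj (R.jShriek.obj Y)))) :=
    ⟨(R.isZero_jUpperStar_obj_iStar_obj _).eq_of_tgt⟩
  exact ((R.adj₁.homEquiv _ _).trans (R.adj₃.homEquiv _ _)).subsingleton.elim _ _

lemma subsingleton_hom_of_recollement {P Q : B}
    (hj : Subsingleton (R.jUpperStar.obj P ⟶ R.jUpperStar.obj Q))
    (hi : Subsingleton (R.iUpperStar.obj P ⟶ R.iShriek.obj Q)) : Subsingleton (P ⟶ Q) := by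
  refine (subsingleton_iff_forall_eq 0).2 fun φ => ?_
  obtain ⟨δ, hT⟩ := R.triangle₂ P
  have hε : R.adj₃.counit.app P ≫ φ = 0 :=
    ((R.adj₃.homEquiv _ _).subsingleton_congr.2 hj).elim _ _
  obtain ⟨ψ, rfl⟩ : ∃ ψ, φ = R.adj₁.unit.app P ≫ ψ := Triangle.yoneda_exact₂ _ hT φ hε
  rw [((R.adj₂.homEquiv _ _).subsingleton_congr.2 hi).elim ψ 0, comp_zero]

lemma objPerp_of_recollement {P Q : B}
    (hj : ObjPerp (R.jUpperStar.obj P) (R.jUpperStar.obj Q))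
    (hi : ObjPerp (R.iUpperStar.obj P) (R.iShriek.obj Q)) : ObjPerp P Q := by
  rw [objPerp_obj_iff] at hj hi
  exact ⟨R.subsingleton_hom_of_recollement hj.1 hi.1, R.subsingleton_hom_of_recollement hj.2 hi.2⟩

def gluedLeft (E₁ : MorphismProperty A) (E₂ : MorphismProperty C) : ObjectProperty B :=
  fun K => coconeClass E₁ (R.iUpperStar.obj K) ∧ coconeClass E₂ (R.jUpperStar.obj K)

def gluedRight (M₁ : MorphismProperty A) (M₂ : MorphismProperty C) : ObjectProperty B :=
  fun K => coconeClass M₁ (R.iShriek.obj K) ∧ coconeClass M₂ (R.jUpperStar.obj K)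

variable {E₁ M₁ : MorphismProperty A} {E₂ M₂ : MorphismProperty C}
  (hA : IsDeflFactorizationSystem E₁ M₁) (hC : IsDeflFactorizationSystem E₂ M₂)
include hA hC

lemma objPerp_of_gluedLeft_of_gluedRight {U V : B} (hU : R.gluedLeft E₁ E₂ U)
    (hV : R.gluedRight M₁ M₂ V) : ObjPerp U V :=
  R.objPerp_of_recollement ((hC.coconeClass_left_iff _).1 hU.2 _ hV.2)
    ((hA.coconeClass_left_iff _).1 hU.1 _ hV.1)

lemma gluedLeft_of_objPerp (U : B) (hU : ∀ V, R.gluedRight M₁ M₂ V → ObjPerp U V) :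
    R.gluedLeft E₁ E₂ U := by
  refine ⟨(hA.coconeClass_left_iff _).2 fun V₁ hV₁ => ?_,
    (hC.coconeClass_left_iff _).2 fun V₂ hV₂ => ?_⟩
  · rw [objPerp_iff_of_adjunction R.adj₁]
    exact hU _ ⟨coconeClass_of_iso hV₁ (asIso (R.adj₂.unit.app V₁)),
      hC.coconeClass_right_of_isZero (R.isZero_jUpperStar_obj_iStar_obj V₁)⟩
  · rw [objPerp_iff_of_adjunction R.adj₄]
    exact hU _ ⟨hA.coconeClass_right_of_isZero (R.isZero_iShriek_obj_jStar_obj V₂),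
      coconeClass_of_iso hV₂ (asIso (R.adj₄.counit.app V₂)).symm⟩

lemma gluedRight_of_objPerp (V : B) (hV : ∀ U, R.gluedLeft E₁ E₂ U → ObjPerp U V) :
    R.gluedRight M₁ M₂ V := by
  refine ⟨(hA.coconeClass_right_iff _).2 fun U₁ hU₁ => ?_,
    (hC.coconeClass_right_iff _).2 fun U₂ hU₂ => ?_⟩
  · rw [← objPerp_iff_of_adjunction R.adj₂]
    exact hV _ ⟨coconeClass_of_iso hU₁ (asIso (R.adj₁.counit.app U₁)).symm,
      hC.coconeClass_left_of_isZero (R.isZero_jUpperStar_obj_iStar_obj U₁)⟩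
  · rw [← objPerp_iff_of_adjunction R.adj₃]
    exact hV _ ⟨hA.coconeClass_left_of_isZero (R.isZero_iUpperStar_obj_jShriek_obj U₂),
      coconeClass_of_iso hU₂ (asIso (R.adj₃.unit.app U₂))⟩

lemma exists_distTriang_gluedLeft_gluedRight (K : B) :
    ∃ (U V : B) (a : U ⟶ K) (b : K ⟶ V) (c : V ⟶ U⟦(1 : ℤ)⟧),
      Triangle.mk a b c ∈ distTriang B ∧ R.gluedLeft E₁ E₂ U ∧ R.gluedRight M₁ M₂ V := by
  obtain ⟨N₂, e₂, he₂, hN₂⟩ := hC.exists_mem_left_coconeClass_right (R.jUpperStar.obj K)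
  obtain ⟨W, aW, bW, hW⟩ := distinguished_cocone_triangle₁ (R.adj₄.homEquiv _ _ e₂)
  obtain ⟨N₁, e₁, he₁, hN₁⟩ := hA.exists_mem_left_coconeClass_right (R.iUpperStar.obj W)
  obtain ⟨U, aU, bU, hU⟩ := distinguished_cocone_triangle₁ (R.adj₁.homEquiv _ _ e₁)
  obtain ⟨V, b, c, hT⟩ := distinguished_cocone_triangle (aU ≫ aW)
  have : IsIso (R.jUpperStar.map aU) := (Triangle.isZero₃_iff_isIso₁ _
    (R.jUpperStar.map_distinguished _ hU)).1 (R.isZero_jUpperStar_obj_iStar_obj N₁)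
  have : IsIso (R.iShriek.map aW) := (Triangle.isZero₃_iff_isIso₁ _
    (R.iShriek.map_distinguished _ hW)).1 (R.isZero_iShriek_obj_jStar_obj N₂)
  have arrowIso₁ : Arrow.mk (R.iShriek.map (aU ≫ aW)) ≅ Arrow.mk (R.iShriek.map aU) :=
    Arrow.isoMk (Iso.refl _) (asIso (R.iShriek.map aW)).symm (by simp)
  have arrowIso₂ : Arrow.mk (R.jUpperStar.map (aU ≫ aW)) ≅ Arrow.mk (R.jUpperStar.map aW) :=
    Arrow.isoMk (asIso (R.jUpperStar.map aU)) (Iso.refl _) (by simp)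
  obtain ⟨eV₁, -⟩ := exists_iso_of_arrow_iso _ _ (R.iShriek.map_distinguished _ hT)
    (R.iShriek.map_distinguished _ hU) arrowIso₁
  obtain ⟨eV₂, -⟩ := exists_iso_of_arrow_iso _ _ (R.jUpperStar.map_distinguished _ hT)
    (R.jUpperStar.map_distinguished _ hW) arrowIso₂
  refine ⟨U, V, aU ≫ aW, b, c, hT, ⟨⟨_, _, e₁, he₁, ?_⟩, ⟨_, _, e₂, he₂, ?_⟩⟩,
    coconeClass_of_iso hN₁ ?_, coconeClass_of_iso hN₂ ?_⟩
  · exact IsCoconeOf.of_adjunction_homEquiv R.adj₁ e₁ ⟨aU, bU, hU⟩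
  · exact (IsCoconeOf.of_adjunction_homEquiv R.adj₄ e₂ ⟨aW, bW, hW⟩).of_iso (Iso.refl _)
      (Iso.refl _) (by simp) (asIso (R.jUpperStar.map aU)).symm
  · exact asIso (R.adj₂.unit.app N₁) ≪≫ (Triangle.π₃.mapIso eV₁).symm
  · exact (asIso (R.adj₄.counit.app N₂)).symm ≪≫ (Triangle.π₃.mapIso eV₂).symm

end TriangulatedRecollement

/-- gluing deflation factorization systems along a recollement of
triangulated categories. -/
theorem glue_deflFactorizationSystem_of_recollement
    (R : TriangulatedRecollement A B C)
    (E₁ M₁ : MorphismProperty A) (E₂ M₂ : MorphismProperty C)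
    (hA : IsDeflFactorizationSystem E₁ M₁) (hC : IsDeflFactorizationSystem E₂ M₂) :
    IsDeflFactorizationSystem
      (fun _ _ f => E₁ (R.iUpperStar.map f) ∧ E₂ (R.jUpperStar.map f))
      (fun _ _ g => M₁ (R.iShriek.map g) ∧ M₂ (R.jUpperStar.map g)) := by
  exact IsDeflFactorizationSystem.of_coconeClasses (R.gluedLeft E₁ E₂) (R.gluedRight M₁ M₂)
    (fun f hf => Iff.and (hA.mem_left_iff_coconeClass (hf.map _))
      (hC.mem_left_iff_coconeClass (hf.map _)))
    (fun g hg => Iff.and (hA.mem_right_iff_coconeClass (hg.map _))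
      (hC.mem_right_iff_coconeClass (hg.map _)))
    (fun _ _ => R.objPerp_of_gluedLeft_of_gluedRight hA hC)
    (R.gluedLeft_of_objPerp hA hC) (R.gluedRight_of_objPerp hA hC)
    (R.exists_distTriang_gluedLeft_gluedRight hA hC)

end RecollementFS
end

section
/- Let C be an abelian category and let (T, F) be a torsion pair in C. Then every monomorphism f : X → Y in C factors as f = r ∘ l, where l : X → K is a monomorphism with coker(l) ∈ T and r : K → Y is a monomorphism with coker(r) ∈ F. -/
/-! Let `0 ⟶ T' ⟶ coker f ⟶ F' ⟶ 0` be the torsion sequence of `coker f` and let `K` be the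
kernel of `Y ⟶ coker f ⟶ F'`, i.e. the preimage of `T'` in `Y`. Then `Y / K ≅ F'`, and the
kernel–cokernel sequence of the composite (snake lemma), whose connecting map into
`coker (Y ⟶ coker f) = 0` vanishes, gives `0 ⟶ X ⟶ K ⟶ T' ⟶ 0`, so `K / X ≅ T'`. -/

open CategoryTheory CategoryTheory.Limits

namespace TorsionFS

variable {C : Type*} [Category C] [Abelian C]

/-- A torsion pair `(T, F)` in an abelian category. -/
structure IsTorsionPair (T F : Set C) : Prop where
  isoClosed_torsion : ∀ {X Y : C}, (X ≅ Y) → X ∈ T → Y ∈ T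
  isoClosed_free : ∀ {X Y : C}, (X ≅ Y) → X ∈ F → Y ∈ F
  hom_zero : ∀ {X Y : C}, X ∈ T → Y ∈ F → ∀ f : X ⟶ Y, f = 0
  exists_ses : ∀ X : C, ∃ (T' F' : C) (_ : T' ∈ T) (_ : F' ∈ F)
      (i : T' ⟶ X) (p : X ⟶ F') (w : i ≫ p = 0),
      (ShortComplex.mk i p w).ShortExact

/-- For monomorphisms `l`, `r`, `l ⊥ r` iff `Hom(coker l, coker r) = 0`. -/
def MonoPerp {A B X Y : C} (l : A ⟶ B) (r : X ⟶ Y) : Prop :=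
  ∀ φ : cokernel l ⟶ cokernel r, φ = 0

/-- `Infl U`: monomorphisms whose cokernel lies in `U`. -/
def Infl (U : Set C) : MorphismProperty C :=
  fun _ _ f => Mono f ∧ cokernel f ∈ U

/-- `Coker L`: objects isomorphic to the cokernel of some morphism in `L`. -/
def CokerClass (L : MorphismProperty C) : Set C :=
  {Z | ∃ (X Y : C) (f : X ⟶ Y), L f ∧ Nonempty (Z ≅ cokernel f)}

/-- A monomorphism factorization system `(L, R)` in an abelian category. -/
structure IsMonoFactorizationSystem (L R : MorphismProperty C) : Prop where
  mono_of_L : ∀ {X Y : C} (f : X ⟶ Y), L f → Mono f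
  mono_of_R : ∀ {X Y : C} (f : X ⟶ Y), R f → Mono f
  factor : ∀ {X Y : C} (f : X ⟶ Y), Mono f →
    ∃ (K : C) (l : X ⟶ K) (r : K ⟶ Y), L l ∧ R r ∧ l ≫ r = f
  left_eq : ∀ {X Y : C} (f : X ⟶ Y),
    L f ↔ (Mono f ∧ ∀ {Z W : C} (g : Z ⟶ W), R g → MonoPerp f g)
  right_eq : ∀ {Z W : C} (g : Z ⟶ W),
    R g ↔ (Mono g ∧ ∀ {X Y : C} (f : X ⟶ Y), L f → MonoPerp f g)

lemma shortExact_kernelMap_of_epi {Y Q Z : C} (g : Y ⟶ Q) [Epi g] (p : Q ⟶ Z) :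
    (ShortComplex.mk (kernel.map g (g ≫ p) (𝟙 _) p (by simp))
      (kernel.map (g ≫ p) p g (𝟙 _) (by simp)) (by ext; simp)).ShortExact := by
  let S := kernelCokernelCompSequence.snakeInput g p
  have hδ : S.δ = 0 := by
    change kernelCokernelCompSequence.δ g p = 0
    rw [kernelCokernelCompSequence.δ_fac, cokernel.π_of_epi, comp_zero, neg_zero]
  exact { exact := S.L₀_exact, mono_f := by dsimp [S]; infer_instance,
          epi_g := S.L₁'_exact.epi_f hδ }

lemma shortExact_kernelLift_comp {S : ShortComplex C} (hS : S.ShortExact)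
    {Z : C} (p : S.X₃ ⟶ Z) :
    (ShortComplex.mk (kernel.lift (S.g ≫ p) S.f (by simp))
      (kernel.lift p (kernel.ι (S.g ≫ p) ≫ S.g) (by simp)) (by ext; simp)).ShortExact := by
  have := hS.epi_g
  let e : S.X₁ ≅ kernel S.g := hS.fIsKernel.conePointUniqueUpToIso (limit.isLimit _)
  refine ShortComplex.shortExact_of_iso ?_ (shortExact_kernelMap_of_epi S.g p)
  refine ShortComplex.isoMk e.symm (Iso.refl _) (Iso.refl _) ?_ ?_
  · ext
    simpa [e] using
      IsLimit.conePointUniqueUpToIso_inv_comp hS.fIsKernel (limit.isLimit _) WalkingParallelPair.zero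
  · ext
    simp

lemma shortExact_cokernel_of_mono {X Y : C} (f : X ⟶ Y) [Mono f] :
    (ShortComplex.mk f (cokernel.π f) (cokernel.condition f)).ShortExact :=
  { exact := ShortComplex.exact_of_g_is_cokernel _ (cokernelIsCokernel f) }

lemma shortExact_kernel_of_epi {Y Z : C} (g : Y ⟶ Z) [Epi g] :
    (ShortComplex.mk (kernel.ι g) g (kernel.condition g)).ShortExact :=
  { exact := ShortComplex.exact_of_f_is_kernel _ (kernelIsKernel g) }

lemma cokernel_mem_of_shortExact {U : Set C} (hU : ∀ {A B : C}, (A ≅ B) → A ∈ U → B ∈ U)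
    {S : ShortComplex C} (hS : S.ShortExact) (h₃ : S.X₃ ∈ U) : cokernel S.f ∈ U :=
  hU (hS.gIsCokernel.coconePointUniqueUpToIso (colimit.isColimit _)) h₃

lemma kernel_mem_of_shortExact {U : Set C} (hU : ∀ {A B : C}, (A ≅ B) → A ∈ U → B ∈ U)
    {S : ShortComplex C} (hS : S.ShortExact) (h₁ : S.X₁ ∈ U) : kernel S.g ∈ U :=
  hU (hS.fIsKernel.conePointUniqueUpToIso (limit.isLimit _)) h₁

/-- if `(T, F)` is a torsion pair in an abelian category `C`, then
every monomorphism `f : X ⟶ Y` factors as `f = r ∘ l` with `l` a monomorphism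
whose cokernel lies in `T` and `r` a monomorphism whose cokernel lies in `F`. -/
theorem torsionPair_mono_factorization
    (T F : Set C) (h : IsTorsionPair T F)
    {X Y : C} (f : X ⟶ Y) (hf : Mono f) :
    ∃ (K : C) (l : X ⟶ K) (r : K ⟶ Y),
      Mono l ∧ cokernel l ∈ T ∧ Mono r ∧ cokernel r ∈ F ∧ l ≫ r = f := by
  have := hf
  obtain ⟨T', F', hT', hF', _, p, _, hS⟩ := h.exists_ses (cokernel f)
  have hl := shortExact_kernelLift_comp (shortExact_cokernel_of_mono f) p
  have : Epi p := hS.epi_g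
  refine ⟨kernel (cokernel.π f ≫ p), _, kernel.ι _, hl.mono_f, ?_, inferInstance, ?_,
    kernel.lift_ι _ _ _⟩
  · exact cokernel_mem_of_shortExact h.isoClosed_torsion hl
      (kernel_mem_of_shortExact h.isoClosed_torsion hS hT')
  · exact cokernel_mem_of_shortExact h.isoClosed_free (shortExact_kernel_of_epi _) hF'

end TorsionFS
end

section
/- Let C be a triangulated category and let (T, F) be a t-structure in C. Then every morphism f : X → Y in C factors as f = r ∘ l, where l : X → K admits a cone lying in T and r : K → Y admits a cone lying in F. -/
open CategoryTheory CategoryTheory.Limits CategoryTheory.Pretriangulated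

namespace TriangFS

variable {C : Type*} [Category C] [Preadditive C] [HasZeroObject C]
  [HasShift C ℤ] [∀ n : ℤ, (shiftFunctor C n).Additive]
  [Pretriangulated C] [IsTriangulated C]

/-- `Z` is a cone of `f : X ⟶ Y` if it fits in a distinguished triangle
`X ⟶ Y ⟶ Z ⟶ X⟦1⟧`. -/
def IsConeOf {X Y : C} (f : X ⟶ Y) (Z : C) : Prop :=
  ∃ (g : Y ⟶ Z) (h : Z ⟶ X⟦(1 : ℤ)⟧), Triangle.mk f g h ∈ distTriang C

/-- `l ⊥ r` iff `Hom(C_l, C_r) = 0` and `Hom(C_l, C_r⟦-1⟧) = 0` for cones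
`C_l` of `l` and `C_r` of `r`. -/
def ConePerp {X Y Z W : C} (l : X ⟶ Y) (r : Z ⟶ W) : Prop :=
  ∀ (Cl Cr : C), IsConeOf l Cl → IsConeOf r Cr →
    (∀ φ : Cl ⟶ Cr, φ = 0) ∧ (∀ φ : Cl ⟶ Cr⟦(-1 : ℤ)⟧, φ = 0)

/-- `Infl U`: morphisms admitting a cone in `U`. -/
def Infl (U : Set C) : MorphismProperty C :=
  fun _ _ f => ∃ Z ∈ U, IsConeOf f Z

/-- `Cone L`: objects isomorphic to a cone of some morphism in `L`. -/
def ConeClass (L : MorphismProperty C) : Set C :=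
  {Z | ∃ (X Y : C) (f : X ⟶ Y), L f ∧ IsConeOf f Z}

/-- A `t`-structure `(U, V)` in a triangulated category. -/
structure IsTStructure (U V : Set C) : Prop where
  isoClosed_left : ∀ {X Y : C}, (X ≅ Y) → X ∈ U → Y ∈ U
  isoClosed_right : ∀ {X Y : C}, (X ≅ Y) → X ∈ V → Y ∈ V
  exists_triangle : ∀ X : C, ∃ (U' V' : C) (_ : U' ∈ U) (_ : V' ∈ V)
      (f : U' ⟶ X) (g : X ⟶ V') (h : V' ⟶ U'⟦(1 : ℤ)⟧),
      Triangle.mk f g h ∈ distTriang C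
  hom_zero : ∀ {X Y : C}, X ∈ U → Y ∈ V → ∀ f : X ⟶ Y, f = 0
  shift_mem : ∀ {X : C}, X ∈ U → X⟦(1 : ℤ)⟧ ∈ U

/-- An inflation factorization system `(L, R)` in a triangulated category. -/
structure IsInflFactorizationSystem (L R : MorphismProperty C) : Prop where
  factor : ∀ {X Y : C} (f : X ⟶ Y),
    ∃ (K : C) (l : X ⟶ K) (r : K ⟶ Y), L l ∧ R r ∧ l ≫ r = f
  left_eq : ∀ {X Y : C} (f : X ⟶ Y),
    L f ↔ ∀ {Z W : C} (g : Z ⟶ W), R g → ConePerp f g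
  right_eq : ∀ {Z W : C} (g : Z ⟶ W),
    R g ↔ ∀ {X Y : C} (f : X ⟶ Y), L f → ConePerp f g

/-- if `(T, F)` is a `t`-structure in a triangulated category `C`,
then every morphism `f : X ⟶ Y` factors as `f = r ∘ l` where `l` admits a cone
in `T` and `r` admits a cone in `F`. -/
theorem tStructure_factorization
    (T F : Set C) (h : IsTStructure T F) {X Y : C} (f : X ⟶ Y) :
    ∃ (K : C) (l : X ⟶ K) (r : K ⟶ Y),
      (∃ Cl ∈ T, IsConeOf l Cl) ∧ (∃ Cr ∈ F, IsConeOf r Cr) ∧ l ≫ r = f := by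
  -- Choose a cone `Cf` of `f`.
  obtain ⟨Cf, g, hmap, T1⟩ := distinguished_cocone_triangle f
  -- Apply the t-structure to `Cf`.
  obtain ⟨U, V, hU, hV, u, v, w, Tt⟩ := h.exists_triangle Cf
  -- Shift the t-structure triangle by `-1`.
  have Tt' : Triangle.mk (((-1 : ℤ)).negOnePow • u⟦(-1 : ℤ)⟧')
      (((-1 : ℤ)).negOnePow • v⟦(-1 : ℤ)⟧')
      (((-1 : ℤ)).negOnePow • w⟦(-1 : ℤ)⟧' ≫ (shiftFunctorComm C 1 (-1)).hom.app U) ∈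
        distTriang C :=
    Triangle.shift_distinguished _ Tt (-1)
  -- Inverse rotation of the triangle of `f`.
  have T1' : Triangle.mk (-hmap⟦(-1 : ℤ)⟧' ≫ (shiftEquiv C (1 : ℤ)).unitIso.inv.app X) f
      (g ≫ (shiftEquiv C (1 : ℤ)).counitIso.inv.app Cf) ∈ distTriang C :=
    inv_rot_of_distTriang _ T1
  set u' : U⟦(-1 : ℤ)⟧ ⟶ Cf⟦(-1 : ℤ)⟧ := ((-1 : ℤ)).negOnePow • u⟦(-1 : ℤ)⟧' with hu'
  set s : Cf⟦(-1 : ℤ)⟧ ⟶ X := -hmap⟦(-1 : ℤ)⟧' ≫ (shiftEquiv C (1 : ℤ)).unitIso.inv.app X with hs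
  -- Cone of the composition `u' ≫ s`.
  obtain ⟨K, l, k, hK⟩ := distinguished_cocone_triangle (u' ≫ s)
  -- Octahedron.
  have oct := Triangulated.someOctahedron rfl Tt' T1' hK
  refine ⟨K, l, oct.m₃, ⟨U⟦(-1 : ℤ)⟧⟦(1 : ℤ)⟧,
    h.isoClosed_left (shiftNegShift U (1 : ℤ)).symm hU, ?_⟩,
    ⟨V⟦(-1 : ℤ)⟧⟦(1 : ℤ)⟧, h.isoClosed_right (shiftNegShift V (1 : ℤ)).symm hV, ?_⟩,
    oct.comm₃⟩
  · exact ⟨_, _, rot_of_distTriang _ hK⟩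
  · exact ⟨_, _, rot_of_distTriang _ oct.mem⟩

end TriangFS
end
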